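/- arXiv:1208.3330 — 3 statements merged into one kernel-verified Lean document; each statement's English description precedes it below -/
import Mathlib

section
/- Let A be an n × n {+1,-1}-matrix and m an integer with n ≥ m > 1. If the sum of det(M)² over all m × m submatrices M of A equals n^m · C(n,m) (i.e., equality holds in the mean-square bound E(det(M)²) ≤ n^m / C(n,m)), then A is a Hadamard matrix, i.e., A·Aᵀ = n·I. -/
/-!
By Cauchy–Binet, summing the squared `m × m` minors of `A` with a fixed row set `f` over all
column sets gives the principal minor `det ((A * Aᵀ)[f, f])`, the Gram determinant of the rows
of `A` indexed by `f`. Each row has squared norm `n`, so Hadamard's inequality bounds this by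
`n ^ m`; as there are `C(n, m)` row sets, equality of the total forces equality for every `f`.
If `uᵢ` is the Gram–Schmidt orthogonalisation of the rows `vᵢ`, the Gram determinant is
`∏ ‖uᵢ‖²` with `‖uᵢ‖ ≤ ‖vᵢ‖`, so equality forces `uᵢ = vᵢ`: the chosen rows are orthogonal.
Since `m ≥ 2`, every pair of rows lies in some row set.
-/

open Matrix Finset InnerProductSpace
open scoped RealInnerProductSpace

def strictMonoProdPermEquivInjective (m : ℕ) (α : Type*) [LinearOrder α] :
    {g : Fin m → α // StrictMono g} × Equiv.Perm (Fin m) ≃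
      {φ : Fin m → α // Function.Injective φ} where
  toFun p := ⟨p.1.1 ∘ p.2, p.1.2.injective.comp p.2.injective⟩
  invFun φ := (⟨φ.1 ∘ Tuple.sort φ.1, (Tuple.monotone_sort φ.1).strictMono_of_injective
    (φ.2.comp (Tuple.sort φ.1).injective)⟩, (Tuple.sort φ.1)⁻¹)
  left_inv := by
    rintro ⟨⟨g, hg⟩, σ⟩
    have hsorted : (g ∘ σ) ∘ Tuple.sort (g ∘ σ) = g := by
      simpa [Function.comp_assoc] using Tuple.unique_monotone (Tuple.monotone_sort (g ∘ σ))
        (τ := σ⁻¹) (by simpa [Function.comp_assoc] using hg.monotone)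
    have hsort : Tuple.sort (g ∘ σ) = σ⁻¹ := by
      ext i : 1
      rw [Equiv.Perm.eq_inv_iff_eq]
      exact hg.injective (congrFun hsorted i)
    exact Prod.ext (Subtype.ext hsorted) (by simp [hsort])
  right_inv φ := by ext : 1; simp [Function.comp_assoc]

section CauchyBinet

variable {m : ℕ} {κ R : Type*} [Fintype κ] [CommRing R]

theorem det_mul_eq_sum_prod_mul_det_submatrix (B : Matrix (Fin m) κ R) (C : Matrix κ (Fin m) R) :
    (B * C).det = ∑ φ : Fin m → κ, (∏ i, B i (φ i)) * (C.submatrix φ id).det := by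
  have hrows : (B * C).det = detRowAlternating fun i => ∑ k, B i k • C k := by
    congr 1
    ext i j
    simp [mul_apply]
  rw [hrows, ← AlternatingMap.coe_multilinearMap, MultilinearMap.map_sum]
  refine Finset.sum_congr rfl fun φ _ => ?_
  rw [MultilinearMap.map_smul_univ, smul_eq_mul]
  rfl

theorem submatrix_mul_transpose_self {ι α : Type*} (A : Matrix ι κ R) (f : α → ι) :
    (A * Aᵀ).submatrix f f = A.submatrix f id * (A.submatrix f id)ᵀ := by
  ext
  simp [mul_apply]

variable [LinearOrder κ]

theorem det_mul_eq_sum_det_submatrix_mul_det_submatrix (B : Matrix (Fin m) κ R)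
    (C : Matrix κ (Fin m) R) :
    (B * C).det = ∑ g : {g : Fin m → κ // StrictMono g},
      (B.submatrix id g).det * (C.submatrix g id).det := by
  classical
  have hnoninj : ∑ φ : {φ : Fin m → κ // ¬ Function.Injective φ},
      (∏ i, B i (φ.1 i)) * (C.submatrix φ id).det = 0 := by
    refine Finset.sum_eq_zero fun ⟨φ, hφ⟩ _ => ?_
    obtain ⟨a, b, hab, hne⟩ := Function.not_injective_iff.mp hφ
    rw [det_zero_of_row_eq hne (by ext; simp [hab]), mul_zero]
  have hperm (g : Fin m → κ) (σ : Equiv.Perm (Fin m)) :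
      (C.submatrix (g ∘ σ) id).det = Equiv.Perm.sign σ * (C.submatrix g id).det :=
    det_permute σ (C.submatrix g id)
  rw [det_mul_eq_sum_prod_mul_det_submatrix, ← Fintype.sum_subtype_add_sum_subtype
    Function.Injective, hnoninj, add_zero,
    ← (strictMonoProdPermEquivInjective m κ).sum_comp, Fintype.sum_prod_type]
  refine Finset.sum_congr rfl fun g _ => ?_
  rw [← det_transpose, det_apply', Finset.sum_mul]
  refine Finset.sum_congr rfl fun σ _ => ?_
  simp only [strictMonoProdPermEquivInjective, Equiv.coe_fn_mk, hperm, transpose_apply,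
    submatrix_apply, id, Function.comp_apply]
  ring

theorem sum_sq_det_submatrix_eq_det_submatrix_mul_transpose {ι : Type*} (A : Matrix ι κ R)
    (f : Fin m → ι) :
    ∑ g : {g : Fin m → κ // StrictMono g}, (A.submatrix f g).det ^ 2
      = ((A * Aᵀ).submatrix f f).det := by
  rw [submatrix_mul_transpose_self, det_mul_eq_sum_det_submatrix_mul_det_submatrix]
  refine Finset.sum_congr rfl fun g _ => ?_
  rw [← transpose_submatrix, det_transpose, submatrix_submatrix, sq]
  rfl

end CauchyBinet

theorem card_strictMono_fin (m : ℕ) (α : Type*) [LinearOrder α] :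
    Nat.card {f : Fin m → α // StrictMono f} = (Nat.card α).choose m := by
  rw [← Set.powersetCard.card, ← Nat.card_congr Set.powersetCard.ofFinEmbEquiv]
  exact Nat.card_congr
    { toFun f := OrderEmbedding.ofStrictMono f.1 f.2
      invFun e := ⟨e, e.strictMono⟩
      left_inv _ := rfl
      right_inv _ := rfl }

theorem Finset.exists_strictMono_fin_subset_range {α : Type*} [LinearOrder α] [Fintype α]
    {m : ℕ} (s : Finset α) (hs : s.card ≤ m) (hm : m ≤ Fintype.card α) :
    ∃ f : Fin m → α, StrictMono f ∧ ↑s ⊆ Set.range f := by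
  obtain ⟨t, hst, rfl⟩ := Finset.exists_superset_card_eq hs hm
  exact ⟨t.orderEmbOfFin rfl, (t.orderEmbOfFin rfl).strictMono, by
    rw [Finset.range_orderEmbOfFin]; exact_mod_cast hst⟩

theorem Finset.eq_of_prod_eq_prod_of_le {ι R : Type*} [CommMonoidWithZero R] [PartialOrder R]
    [ZeroLEOneClass R] [PosMulStrictMono R] [Nontrivial R] {s : Finset ι} {f g : ι → R}
    (hf : ∀ i ∈ s, 0 ≤ f i) (hfg : ∀ i ∈ s, f i ≤ g i) (hg : ∀ i ∈ s, 0 < g i)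
    (h : ∏ i ∈ s, f i = ∏ i ∈ s, g i) : ∀ i ∈ s, f i = g i := by
  have hf_pos : ∀ i ∈ s, 0 < f i := fun i hi => (hf i hi).lt_of_ne fun h0 =>
    (Finset.prod_pos hg).ne' (h ▸ Finset.prod_eq_zero hi h0.symm)
  by_contra! hne
  obtain ⟨i, hi, hlt⟩ := hne
  exact (Finset.prod_lt_prod hf_pos hfg ⟨i, hi, (hfg i hi).lt_of_ne hlt⟩).ne h

section Gram

variable {E ι : Type*} [NormedAddCommGroup E] [InnerProductSpace ℝ E]
  [LinearOrder ι] [LocallyFiniteOrderBot ι] [WellFoundedLT ι]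

theorem inner_gramSchmidt_self_eq_norm_sq (v : ι → E) (i : ι) :
    ⟪gramSchmidt ℝ v i, v i⟫ = ‖gramSchmidt ℝ v i‖ ^ 2 := by
  conv_lhs => rw [gramSchmidt_def'' ℝ v i]
  rw [inner_add_right, inner_sum, real_inner_self_eq_norm_sq, add_eq_left]
  refine Finset.sum_eq_zero fun j hj => ?_
  rw [real_inner_smul_right, gramSchmidt_orthogonal ℝ v (Finset.mem_Iio.mp hj).ne', mul_zero]

theorem norm_sq_eq_norm_gramSchmidt_sq_add_norm_sub_sq (v : ι → E) (i : ι) :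
    ‖v i‖ ^ 2 = ‖gramSchmidt ℝ v i‖ ^ 2 + ‖v i - gramSchmidt ℝ v i‖ ^ 2 := by
  have horth : ⟪gramSchmidt ℝ v i, v i - gramSchmidt ℝ v i⟫ = 0 := by
    rw [inner_sub_right, inner_gramSchmidt_self_eq_norm_sq, real_inner_self_eq_norm_sq, sub_self]
  simpa [sq] using norm_add_sq_eq_norm_sq_add_norm_sq_real horth

theorem norm_gramSchmidt_sq_le (v : ι → E) (i : ι) : ‖gramSchmidt ℝ v i‖ ^ 2 ≤ ‖v i‖ ^ 2 := by
  rw [norm_sq_eq_norm_gramSchmidt_sq_add_norm_sub_sq v i]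
  exact le_add_of_nonneg_right (sq_nonneg _)

variable [Fintype ι]

noncomputable def gramSchmidtCoeff (v : ι → E) : Matrix ι ι ℝ :=
  of fun i j => if i = j then 1 else
    if j < i then ⟪gramSchmidt ℝ v j, v i⟫ / ‖gramSchmidt ℝ v j‖ ^ 2 else 0

theorem det_gramSchmidtCoeff (v : ι → E) : (gramSchmidtCoeff v).det = 1 := by
  rw [det_of_isLowerTriangular _ fun i j (hij : i < j) => by
    simp [gramSchmidtCoeff, hij.ne, hij.not_gt]]
  simp [gramSchmidtCoeff]

theorem sum_gramSchmidtCoeff_smul_gramSchmidt (v : ι → E) (i : ι) :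
    ∑ j, gramSchmidtCoeff v i j • gramSchmidt ℝ v j = v i := by
  rw [← Finset.sum_subset (Finset.subset_univ (Finset.Iic i)) fun j _ hj => by
      simp_all [gramSchmidtCoeff, ne_of_lt, not_lt_of_gt],
    ← Finset.Iio_insert, Finset.sum_insert Finset.notMem_Iio_self, gramSchmidt_def'' ℝ v i]
  congr 1
  · simp [gramSchmidtCoeff]
  · refine Finset.sum_congr rfl fun j hj => ?_
    have hji : j < i := Finset.mem_Iio.mp hj
    simp [gramSchmidtCoeff, hji.ne', hji]

theorem det_gram_eq_prod_norm_gramSchmidt_sq (v : ι → E) :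
    (gram ℝ v).det = ∏ i, ‖gramSchmidt ℝ v i‖ ^ 2 := by
  have hfactor : gram ℝ v = gramSchmidtCoeff v * of fun i j => ⟪gramSchmidt ℝ v i, v j⟫ := by
    ext i k
    conv_lhs => rw [gram_apply, ← sum_gramSchmidtCoeff_smul_gramSchmidt v i]
    simp [mul_apply, sum_inner, real_inner_smul_left]
  have hupper : (of fun i j => ⟪gramSchmidt ℝ v i, v j⟫).IsUpperTriangular :=
    fun i j (hij : j < i) => gramSchmidt_inv_triangular ℝ v hij
  rw [hfactor, det_mul, det_gramSchmidtCoeff, one_mul, det_of_isUpperTriangular hupper]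
  exact Finset.prod_congr rfl fun i _ => inner_gramSchmidt_self_eq_norm_sq v i

theorem det_gram_le_prod_norm_sq (v : ι → E) : (gram ℝ v).det ≤ ∏ i, ‖v i‖ ^ 2 := by
  rw [det_gram_eq_prod_norm_gramSchmidt_sq]
  exact Finset.prod_le_prod (fun i _ => sq_nonneg _) fun i _ => norm_gramSchmidt_sq_le v i

theorem pairwise_inner_eq_zero_of_det_gram_eq_prod (v : ι → E) (hv : ∀ i, v i ≠ 0)
    (h : (gram ℝ v).det = ∏ i, ‖v i‖ ^ 2) : Pairwise fun i j => ⟪v i, v j⟫ = 0 := by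
  have hnorm (i : ι) : ‖gramSchmidt ℝ v i‖ ^ 2 = ‖v i‖ ^ 2 :=
    Finset.eq_of_prod_eq_prod_of_le (fun i _ => sq_nonneg _)
      (fun i _ => norm_gramSchmidt_sq_le v i) (fun i _ => pow_pos (norm_pos_iff.mpr (hv i)) 2)
      (det_gram_eq_prod_norm_gramSchmidt_sq v ▸ h) i (mem_univ i)
  have hfixed (i : ι) : gramSchmidt ℝ v i = v i := by
    have h := norm_sq_eq_norm_gramSchmidt_sq_add_norm_sub_sq v i
    rw [hnorm i, left_eq_add, sq_eq_zero_iff, norm_eq_zero, sub_eq_zero] at h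
    exact h.symm
  intro i j hij
  rw [← hfixed i, ← hfixed j]
  exact gramSchmidt_orthogonal ℝ v hij

end Gram

section Hadamard

variable {ι κ : Type*} [Fintype κ]

theorem gram_toLp_eq_mul_transpose (B : Matrix ι κ ℝ) :
    gram ℝ (fun i => WithLp.toLp 2 (B i)) = B * Bᵀ := by
  ext i j
  simp [gram_apply, EuclideanSpace.inner_toLp_toLp, mul_apply', dotProduct_comm]

theorem norm_toLp_sq (x : κ → ℝ) : ‖WithLp.toLp 2 x‖ ^ 2 = x ⬝ᵥ x := by
  rw [← real_inner_self_eq_norm_sq, EuclideanSpace.inner_toLp_toLp]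
  simp

variable [Fintype ι] [LinearOrder ι] [LocallyFiniteOrderBot ι]

theorem det_mul_transpose_le_prod_dotProduct (B : Matrix ι κ ℝ) :
    (B * Bᵀ).det ≤ ∏ i, B i ⬝ᵥ B i := by
  simpa [gram_toLp_eq_mul_transpose, norm_toLp_sq] using
    det_gram_le_prod_norm_sq fun i => WithLp.toLp 2 (B i)

theorem mul_transpose_apply_eq_zero_of_det_eq_prod (B : Matrix ι κ ℝ) (hB : ∀ i, B i ≠ 0)
    (h : (B * Bᵀ).det = ∏ i, B i ⬝ᵥ B i) {i j : ι} (hij : i ≠ j) : (B * Bᵀ) i j = 0 := by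
  have horth : ⟪WithLp.toLp 2 (B i), WithLp.toLp 2 (B j)⟫ = 0 :=
    pairwise_inner_eq_zero_of_det_gram_eq_prod (fun i => WithLp.toLp 2 (B i))
      (by simpa using hB) (by simpa [gram_toLp_eq_mul_transpose, norm_toLp_sq] using h) hij
  rwa [← gram_apply (v := fun i => WithLp.toLp 2 (B i)), gram_toLp_eq_mul_transpose] at horth

end Hadamard

section SignMatrix

variable {ι κ : Type*} [Fintype κ] {A : Matrix ι κ ℤ}

omit A in
theorem dotProduct_self_eq_card_of_sign {R : Type*} [Ring R] {A : Matrix ι κ R}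
    (hA : ∀ i j, A i j = 1 ∨ A i j = -1) (i : ι) : A i ⬝ᵥ A i = Fintype.card κ := by
  have hsq (k : κ) : A i k * A i k = 1 := by rcases hA i k with h | h <;> simp [h]
  simp [dotProduct, hsq]

theorem map_intCast_mul_transpose (A : Matrix ι κ ℤ) :
    (A * Aᵀ).map ((↑) : ℤ → ℝ) = A.map ((↑) : ℤ → ℝ) * (A.map ((↑) : ℤ → ℝ))ᵀ := by
  rw [← transpose_map]
  exact Matrix.map_mul (f := Int.castRingHom ℝ)

omit [Fintype κ] in
theorem map_intCast_apply_eq_one_or_neg_one (hA : ∀ i j, A i j = 1 ∨ A i j = -1) (i : ι) (j : κ) :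
    A.map ((↑) : ℤ → ℝ) i j = 1 ∨ A.map ((↑) : ℤ → ℝ) i j = -1 := by
  rcases hA i j with h | h <;> simp [h]

variable [Fintype ι] [LinearOrder ι] [LocallyFiniteOrderBot ι]

theorem det_mul_transpose_le_of_sign (hA : ∀ i j, A i j = 1 ∨ A i j = -1) :
    (A * Aᵀ).det ≤ Fintype.card κ ^ Fintype.card ι := by
  have h := det_mul_transpose_le_prod_dotProduct (A.map ((↑) : ℤ → ℝ))
  simp only [dotProduct_self_eq_card_of_sign (map_intCast_apply_eq_one_or_neg_one hA),
    prod_const, card_univ, ← map_intCast_mul_transpose, ← Int.cast_det] at h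
  exact_mod_cast h

theorem mul_transpose_apply_eq_zero_of_sign (hA : ∀ i j, A i j = 1 ∨ A i j = -1)
    (h : (A * Aᵀ).det = Fintype.card κ ^ Fintype.card ι) {i j : ι} (hij : i ≠ j) :
    (A * Aᵀ) i j = 0 := by
  rcases isEmpty_or_nonempty κ with hκ | ⟨⟨k⟩⟩
  · simp [mul_apply]
  have hsign := map_intCast_apply_eq_one_or_neg_one hA
  have hrows (i : ι) : A.map ((↑) : ℤ → ℝ) i ≠ 0 := fun h0 => by
    have h1 := hsign i k
    rw [h0] at h1
    norm_num at h1
  have hdet : (A.map ((↑) : ℤ → ℝ) * (A.map ((↑) : ℤ → ℝ))ᵀ).det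
      = ∏ i, A.map ((↑) : ℤ → ℝ) i ⬝ᵥ A.map ((↑) : ℤ → ℝ) i := by
    rw [← map_intCast_mul_transpose, ← Int.cast_det, h]
    simp [dotProduct_self_eq_card_of_sign hsign]
  have h' := mul_transpose_apply_eq_zero_of_det_eq_prod _ hrows hdet hij
  rw [← map_intCast_mul_transpose, map_apply] at h'
  exact_mod_cast h'

end SignMatrix

/-- If the sum of squared minors of order `m` of an `n × n` `{±1}`-matrix `A`
(over all pairs of strictly monotone index maps `Fin m → Fin n`) attains the
upper bound `n^m * C(n,m)`, then `A` is a Hadamard matrix. -/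
theorem hadamard_of_sum_sq_minors_eq (n m : ℕ) (hm : 1 < m) (hmn : m ≤ n)
    (A : Matrix (Fin n) (Fin n) ℤ) (hA : ∀ i j, A i j = 1 ∨ A i j = -1)
    (heq : ∑ f : {f : Fin m → Fin n // StrictMono f},
        ∑ g : {g : Fin m → Fin n // StrictMono g},
          (A.submatrix f.1 g.1).det ^ 2 = (n : ℤ) ^ m * (n.choose m : ℤ)) :
    A * Aᵀ = (n : ℤ) • (1 : Matrix (Fin n) (Fin n) ℤ) := by
  have hsign (f : Fin m → Fin n) : ∀ a k, A.submatrix f id a k = 1 ∨ A.submatrix f id a k = -1 :=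
    fun a k => hA (f a) k
  have hsum : ∑ f : {f : Fin m → Fin n // StrictMono f}, ((A * Aᵀ).submatrix f.1 f.1).det
      = ∑ _f : {f : Fin m → Fin n // StrictMono f}, (n : ℤ) ^ m := by
    rw [sum_const, card_univ, Fintype.card_eq_nat_card, card_strictMono_fin,
      Nat.card_eq_fintype_card, Fintype.card_fin, nsmul_eq_mul, mul_comm, ← heq]
    simp only [sum_sq_det_submatrix_eq_det_submatrix_mul_transpose]
  have hprincipal (f : {f : Fin m → Fin n // StrictMono f}) :
      ((A * Aᵀ).submatrix f.1 f.1).det = n ^ m := by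
    refine (sum_eq_sum_iff_of_le fun f _ => ?_).mp hsum f (mem_univ f)
    simpa [submatrix_mul_transpose_self] using det_mul_transpose_le_of_sign (hsign f)
  ext i j
  rcases eq_or_ne i j with rfl | hij
  · simp [mul_apply', dotProduct_self_eq_card_of_sign hA]
  obtain ⟨f, hf, hij_mem⟩ := Finset.exists_strictMono_fin_subset_range {i, j}
    (card_le_two.trans hm) (by simpa using hmn)
  obtain ⟨a, rfl⟩ := hij_mem (mem_coe.mpr (mem_insert_self i {j}))
  obtain ⟨b, rfl⟩ := hij_mem (mem_coe.mpr (mem_insert_of_mem (mem_singleton_self j)))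
  have h := mul_transpose_apply_eq_zero_of_sign (hsign f)
    (by simpa [submatrix_mul_transpose_self] using hprincipal ⟨f, hf⟩) (ne_of_apply_ne f hij)
  rw [← submatrix_mul_transpose_self, submatrix_apply] at h
  simpa [hij] using h
end

section
/- Let B be an m × n matrix with entries in {+1, -1}, where m ≤ n. Then det(B·Bᵀ) ≤ n^m, with equality if and only if the rows of B are pairwise orthogonal. Consequently (by the Cauchy–Binet formula), the sum of det(M)² over all m × m submatrices M of B obtained by choosing m of the n columns is at most n^m. -/
/-!
The Gram matrix `G = B * Bᵀ` of a `{±1}`-matrix is positive semidefinite with every diagonal entry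
equal to `n`, so its eigenvalues are nonnegative reals with sum `m * n`. By AM-GM their product
`det G` is at most `n ^ m`, with equality only when all eigenvalues equal `n`, i.e. `G = n • 1`,
which says that the rows of `B` are orthogonal. Cauchy–Binet writes `det G` as the sum of the
squares of the maximal minors of `B`.
-/

open Matrix Finset Function Equiv

namespace Real

variable {ι : Type*} [Fintype ι] {z : ι → ℝ} {c : ℝ}

theorem prod_le_pow_card_of_sum_eq (hz : ∀ i, 0 ≤ z i) (hsum : ∑ i, z i = Fintype.card ι * c) :
    ∏ i, z i ≤ c ^ Fintype.card ι ∧ (∏ i, z i = c ^ Fintype.card ι → ∀ i, z i = c) := by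
  rcases isEmpty_or_nonempty ι with hι | hι
  · simp
  set k := Fintype.card ι
  have hk : (k : ℝ) ≠ 0 := Nat.cast_ne_zero.mpr Fintype.card_ne_zero
  have hw : ∑ _i : ι, (k : ℝ)⁻¹ = 1 := by simp [k, hk]
  have hmean : ∑ i, (k : ℝ)⁻¹ * z i = c := by rw [← mul_sum, hsum, inv_mul_cancel_left₀ hk]
  set g := ∏ i, z i ^ (k : ℝ)⁻¹
  have hg : g ^ k = ∏ i, z i := by
    rw [← prod_pow]
    exact prod_congr rfl fun i _ => rpow_inv_natCast_pow (hz i) Fintype.card_ne_zero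
  have hg0 : 0 ≤ g := prod_nonneg fun i _ => rpow_nonneg (hz i) _
  have hgc : g ≤ c := hmean ▸ geom_mean_le_arith_mean_weighted univ _ z
    (fun _ _ => by positivity) hw fun i _ => hz i
  refine ⟨hg ▸ pow_le_pow_left₀ hg0 hgc k, fun heq i => ?_⟩
  have hgc' : g = c := (pow_left_inj₀ hg0 (hg0.trans hgc) Fintype.card_ne_zero).mp (hg.trans heq)
  rw [← hmean]
  exact (geom_mean_eq_arith_mean_weighted_iff_of_pos' univ _ z (fun _ _ => by positivity) hw
    fun i _ => hz i).mp (hgc'.trans hmean.symm) i (mem_univ i)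

end Real

theorem StrictMono.bijective_comp_perm {m : ℕ} {ι : Type*} [Fintype ι] [LinearOrder ι] :
    Bijective fun x : {g : Fin m → ι // StrictMono g} × Perm (Fin m) =>
      (⟨x.1.1 ∘ x.2, x.1.2.injective.comp x.2.injective⟩ : {p : Fin m → ι // Injective p}) := by
  constructor
  · rintro ⟨⟨g, hg⟩, τ⟩ ⟨⟨g', hg'⟩, τ'⟩ h
    have hcomp : g ∘ τ = g' ∘ τ' := congrArg Subtype.val h
    have hgg' : g = g' := by
      rw [← hg.range_inj hg', ← τ.surjective.range_comp, hcomp, τ'.surjective.range_comp]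
    subst hgg'
    have hττ' : τ = τ' := Equiv.ext fun i => hg.injective (congrFun hcomp i)
    rw [hττ']
  · rintro ⟨p, hp⟩
    have hcard : (univ.image p).card = m := by simp [card_image_of_injective _ hp]
    set g := (univ.image p).orderEmbOfFin hcard
    have hmem : ∀ i, ∃ j, g j = p i := fun i => by
      rw [← Set.mem_range, range_orderEmbOfFin]
      simp
    choose τ hτ using hmem
    have hτinj : Injective τ := fun i j hij => hp (by rw [← hτ i, ← hτ j, hij])
    exact ⟨⟨⟨g, g.strictMono⟩, Equiv.ofBijective τ (Finite.injective_iff_bijective.mp hτinj)⟩,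
      Subtype.ext (funext hτ)⟩

namespace Matrix

theorem mul_transpose_apply_self_of_forall_eq_one_or_neg_one {R m κ : Type*} [CommRing R]
    [Fintype κ] {B : Matrix m κ R} (hB : ∀ i j, B i j = 1 ∨ B i j = -1) (i : m) :
    (B * Bᵀ) i i = Fintype.card κ := by
  have hsq : ∀ k, B i k * B i k = 1 := fun k => by rcases hB i k with h | h <;> simp [h]
  simp [mul_apply, hsq]

section Gram

variable {m κ : Type*} [Fintype m] [DecidableEq m] [Fintype κ]

theorem IsHermitian.eq_smul_one_of_eigenvalues_eq {A : Matrix m m ℝ} (hA : A.IsHermitian) {c : ℝ}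
    (h : ∀ i, hA.eigenvalues i = c) : A = c • 1 := by
  rw [hA.spectral_theorem, show diagonal (RCLike.ofReal ∘ hA.eigenvalues) = algebraMap ℝ _ c by
    rw [algebraMap_eq_diagonal]; congr 1; funext i; simp [h]]
  simp [Algebra.algebraMap_eq_smul_one]

theorem PosSemidef.det_le_pow_card_of_trace_eq {A : Matrix m m ℝ} (hA : A.PosSemidef) {c : ℝ}
    (htr : A.trace = Fintype.card m * c) :
    A.det ≤ c ^ Fintype.card m ∧ (A.det = c ^ Fintype.card m → A = c • 1) := by
  have hsum : ∑ i, hA.isHermitian.eigenvalues i = Fintype.card m * c := by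
    simpa [hA.isHermitian.trace_eq_sum_eigenvalues] using htr
  have hdet : A.det = ∏ i, hA.isHermitian.eigenvalues i := by
    simpa using hA.isHermitian.det_eq_prod_eigenvalues
  obtain ⟨hle, heq⟩ := Real.prod_le_pow_card_of_sum_eq hA.eigenvalues_nonneg hsum
  exact ⟨hdet ▸ hle, fun h => hA.isHermitian.eq_smul_one_of_eigenvalues_eq (heq (hdet ▸ h))⟩

theorem det_mul_transpose_le_pow_card_of_diag_eq (B : Matrix m κ ℤ) {c : ℤ}
    (hdiag : ∀ i, (B * Bᵀ) i i = c) :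
    (B * Bᵀ).det ≤ c ^ Fintype.card m ∧ ((B * Bᵀ).det = c ^ Fintype.card m → B * Bᵀ = c • 1) := by
  set B' := B.map (Int.cast : ℤ → ℝ)
  have hgram : (B * Bᵀ).map (Int.cast : ℤ → ℝ) = B' * B'ᵀ := by
    rw [← transpose_map]
    exact Matrix.map_mul (f := Int.castRingHom ℝ)
  have hpsd : (B' * B'ᵀ).PosSemidef := by
    simpa using posSemidef_self_mul_conjTranspose B'
  have htr : (B' * B'ᵀ).trace = Fintype.card m * c := by
    simp [← hgram, trace, hdiag]
  obtain ⟨hle, heq⟩ := hpsd.det_le_pow_card_of_trace_eq htr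
  rw [← hgram, ← Int.cast_det] at hle heq
  refine ⟨by exact_mod_cast hle, fun h => ?_⟩
  have hreal := heq (by exact_mod_cast h)
  ext i j
  have hij := congrFun₂ hreal i j
  simp only [map_apply, smul_apply, one_apply, smul_eq_mul] at hij ⊢
  exact_mod_cast hij

end Gram

section CauchyBinet

variable {R : Type*} [CommRing R] {ι : Type*}

theorem det_mul_eq_sum_det_submatrix_mul_prod {n : Type*} [Fintype n] [DecidableEq n] [Fintype ι]
    (M : Matrix n ι R) (N : Matrix ι n R) :
    det (M * N) = ∑ p : n → ι, det (M.submatrix id p) * ∏ i, N (p i) i := by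
  simp only [det_apply', mul_apply, prod_univ_sum, mul_sum, Fintype.piFinset_univ]
  rw [Finset.sum_comm]
  refine sum_congr rfl fun p _ => ?_
  simp only [submatrix_apply, id_eq, sum_mul, prod_mul_distrib, mul_assoc]

theorem det_submatrix_id_eq_zero_of_not_injective {n : Type*} [Fintype n] [DecidableEq n]
    {M : Matrix n ι R} {p : n → ι} (hp : ¬Injective p) : det (M.submatrix id p) = 0 := by
  obtain ⟨i, j, hpij, hij⟩ := Function.not_injective_iff.mp hp
  exact det_zero_of_column_eq hij fun k => by simp [hpij]

theorem det_mul_eq_sum_strictMono {m : ℕ} [Fintype ι] [LinearOrder ι] (M : Matrix (Fin m) ι R)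
    (N : Matrix ι (Fin m) R) :
    det (M * N) = ∑ g : {g : Fin m → ι // StrictMono g},
      det (M.submatrix id g.1) * det (N.submatrix g.1 id) := by
  classical
  calc det (M * N)
      = ∑ p : Fin m → ι, det (M.submatrix id p) * ∏ i, N (p i) i :=
        det_mul_eq_sum_det_submatrix_mul_prod M N
    _ = ∑ p : {p : Fin m → ι // Injective p}, det (M.submatrix id p.1) * ∏ i, N (p.1 i) i := by
        rw [← sum_filter_of_ne (p := Injective), sum_subtype _ fun p => mem_filter_univ p]
        intro p _ hp
        by_contra hinj
        simp [det_submatrix_id_eq_zero_of_not_injective hinj] at hp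
    _ = ∑ x : {g : Fin m → ι // StrictMono g} × Perm (Fin m),
          det (M.submatrix id (x.1.1 ∘ x.2)) * ∏ i, N (x.1.1 (x.2 i)) i :=
        (Fintype.sum_bijective _ StrictMono.bijective_comp_perm _ _ fun _ => rfl).symm
    _ = ∑ g : {g : Fin m → ι // StrictMono g},
          det (M.submatrix id g.1) * det (N.submatrix g.1 id) := by
        rw [Fintype.sum_prod_type]
        refine sum_congr rfl fun g _ => ?_
        simp only [det_apply' (N.submatrix g.1 id), mul_sum]
        refine sum_congr rfl fun τ _ => ?_
        rw [show M.submatrix id (g.1 ∘ τ) = (M.submatrix id g.1).submatrix id τ from rfl,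
          det_permute']
        simp only [submatrix_apply, id_eq]
        ring

end CauchyBinet

end Matrix

theorem det_gram_le_and_sum_sq_minors_le_general (m n : ℕ)
    (B : Matrix (Fin m) (Fin n) ℤ) (hB : ∀ i j, B i j = 1 ∨ B i j = -1) :
    (B * Bᵀ).det ≤ (n : ℤ) ^ m ∧
    ((B * Bᵀ).det = (n : ℤ) ^ m ↔
      ∀ i j : Fin m, i ≠ j → ∑ k, B i k * B j k = 0) ∧
    ∑ g : {g : Fin m → Fin n // StrictMono g},
      (B.submatrix id g.1).det ^ 2 ≤ (n : ℤ) ^ m := by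
  have hdiag : ∀ i, (B * Bᵀ) i i = n := by
    simpa using mul_transpose_apply_self_of_forall_eq_one_or_neg_one hB
  obtain ⟨hle, hrigid⟩ := B.det_mul_transpose_le_pow_card_of_diag_eq hdiag
  rw [Fintype.card_fin] at hle hrigid
  have hgram : ∀ i j, (B * Bᵀ) i j = ∑ k, B i k * B j k := fun i j => rfl
  refine ⟨hle, ⟨fun h i j hij => ?_, fun horth => ?_⟩, ?_⟩
  · simp [← hgram, hrigid h, one_apply_ne hij]
  · have hscalar : B * Bᵀ = (n : ℤ) • 1 := by
      ext i j
      rcases eq_or_ne i j with rfl | hij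
      · simp [hdiag]
      · simp [hgram, horth i j hij, one_apply_ne hij]
    rw [hscalar, det_smul, det_one, Fintype.card_fin, mul_one]
  · rw [det_mul_eq_sum_strictMono] at hle
    simpa [← transpose_submatrix, sq] using hle

/-- For an `m × n` `{±1}`-matrix `B` with `m ≤ n`: `det (B * Bᵀ) ≤ n^m`, with
equality iff the rows of `B` are pairwise orthogonal; consequently the sum of
`det(M)^2` over all `m × m` submatrices `M` of `B` obtained by choosing `m` of
the `n` columns (strictly monotone column maps) is at most `n^m`. -/
theorem det_gram_le_and_sum_sq_minors_le (m n : ℕ) (hmn : m ≤ n)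
    (B : Matrix (Fin m) (Fin n) ℤ) (hB : ∀ i j, B i j = 1 ∨ B i j = -1) :
    (B * Bᵀ).det ≤ (n : ℤ) ^ m ∧
    ((B * Bᵀ).det = (n : ℤ) ^ m ↔
      ∀ i j : Fin m, i ≠ j → ∑ k, B i k * B j k = 0) ∧
    ∑ g : {g : Fin m → Fin n // StrictMono g},
      (B.submatrix id g.1).det ^ 2 ≤ (n : ℤ) ^ m :=
  det_gram_le_and_sum_sq_minors_le_general m n B hB
end

section
/- Let A be an n × n {+1,-1}-matrix and m an integer with n ≥ m > 1. Let Z(m,A) denote the number of m × m submatrices of A with zero determinant (counted over all C(n,m)² choices of row and column index sets). Then Z(m,A) ≥ C(n,m)·(C(n,m) − 4·(n/4)^m); equivalently, 4^(m-1)·Z(m,A) ≥ C(n,m)·(4^(m-1)·C(n,m) − n^m). -/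
/-!
Fix a row set `f` and let `B` be the `m × n` sign matrix formed by those rows of `A`. By
Cauchy–Binet, the squares of the `m × m` minors of `B` add up to `det (B Bᵀ)`, and AM–GM on
the eigenvalues of the positive semidefinite matrix `B Bᵀ` bounds this by
`(tr (B Bᵀ) / m) ^ m = n ^ m`. A nonzero minor of a sign matrix is divisible by `2 ^ (m - 1)`,
so its square is at least `4 ^ (m - 1)`. Hence at most `n ^ m / 4 ^ (m - 1)` of the `C(n, m)`
column sets give a nonzero minor with the rows `f`; summing over the row sets gives the bound.
-/

open Matrix Finset Equiv Function

theorem Real.prod_le_sum_div_card_pow {ι : Type*} (s : Finset ι) (z : ι → ℝ)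
    (hz : ∀ i ∈ s, 0 ≤ z i) : ∏ i ∈ s, z i ≤ ((∑ i ∈ s, z i) / #s) ^ #s := by
  rcases s.eq_empty_or_nonempty with rfl | hs
  · simp
  have hcard : (0 : ℝ) < #s := by exact_mod_cast hs.card_pos
  have hamgm := Real.geom_mean_le_arith_mean_weighted s (fun _ => (#s : ℝ)⁻¹) z
    (fun _ _ => by positivity) (by simp [hcard.ne']) hz
  rw [← Finset.mul_sum, inv_mul_eq_div] at hamgm
  calc ∏ i ∈ s, z i = (∏ i ∈ s, z i ^ (#s : ℝ)⁻¹) ^ #s := by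
        rw [← Finset.prod_pow]
        refine Finset.prod_congr rfl fun i hi => ?_
        rw [← Real.rpow_mul_natCast (hz i hi), inv_mul_cancel₀ hcard.ne', Real.rpow_one]
    _ ≤ _ := pow_le_pow_left₀ (Finset.prod_nonneg fun i hi => by have := hz i hi; positivity)
        hamgm _

theorem card_strictMono_fin_s6 (m n : ℕ) :
    Fintype.card {f : Fin m → Fin n // StrictMono f} = n.choose m := by
  let e : {f : Fin m → Fin n // StrictMono f} ≃ (Fin m ↪o Fin n) :=
    { toFun f := OrderEmbedding.ofStrictMono f.1 f.2
      invFun e := ⟨e, e.strictMono⟩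
      left_inv _ := rfl
      right_inv _ := rfl }
  rw [← Nat.card_eq_fintype_card, Nat.card_congr (e.trans Set.powersetCard.ofFinEmbEquiv),
    Set.powersetCard.card, Nat.card_eq_fintype_card, Fintype.card_fin]

section StrictMonoDecomposition

variable {m : ℕ} {α : Type*} [LinearOrder α]

theorem Function.Injective.exists_strictMono_comp_perm {f : Fin m → α} (hf : Injective f) :
    ∃ h : Fin m → α, StrictMono h ∧ ∃ π : Perm (Fin m), h ∘ π = f :=
  ⟨f ∘ Tuple.sort f,
    (Tuple.monotone_sort f).strictMono_of_injective (hf.comp (Tuple.sort f).injective),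
    (Tuple.sort f)⁻¹, by ext i; simp⟩

theorem injective_strictMono_comp_perm :
    Injective fun p : {h : Fin m → α // StrictMono h} × Perm (Fin m) => p.1.1 ∘ p.2 := by
  rintro ⟨⟨h, hh⟩, π⟩ ⟨⟨h', hh'⟩, π'⟩ heq
  simp only at heq
  have hrange : Set.range h = Set.range h' := by
    rw [← π.surjective.range_comp h, heq, π'.surjective.range_comp]
  obtain rfl : h = h' := (hh.range_inj hh').mp hrange
  obtain rfl : π = π' := Equiv.ext fun i => hh.injective (congrFun heq i)
  rfl

theorem sum_eq_sum_strictMono_sum_perm [Fintype α] {M : Type*} [AddCommMonoid M]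
    (F : (Fin m → α) → M) (hF : ∀ f, ¬ Injective f → F f = 0) :
    ∑ f, F f =
      ∑ h : {h : Fin m → α // StrictMono h}, ∑ π : Perm (Fin m), F (h.1 ∘ π) := by
  rw [← Fintype.sum_prod_type']
  refine (Finset.sum_of_injOn (fun p : {h : Fin m → α // StrictMono h} × Perm (Fin m) =>
    p.1.1 ∘ p.2) injective_strictMono_comp_perm.injOn (by simp)
    (fun f _ hf => hF f fun hinj => hf ?_) (fun _ _ => rfl)).symm
  obtain ⟨h, hh, π, rfl⟩ := hinj.exists_strictMono_comp_perm
  exact ⟨(⟨h, hh⟩, π), by simp, rfl⟩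

end StrictMonoDecomposition

namespace Matrix

section SignMatrix

variable {ι : Type*} [Fintype ι] [DecidableEq ι] {R : Type*} [CommRing R]

theorem pow_card_sub_one_dvd_det_of_dvd_row {M : Matrix ι ι R} {d : R} (k : ι)
    (hd : ∀ i ≠ k, ∀ j, d ∣ M i j) : d ^ (Fintype.card ι - 1) ∣ M.det := by
  rw [← det_transpose, det_apply']
  refine Finset.dvd_sum fun σ _ => Dvd.dvd.mul_left ?_ _
  rw [Fintype.prod_eq_mul_prod_compl k]
  refine Dvd.dvd.mul_left ?_ _
  calc d ^ (Fintype.card ι - 1) = ∏ _i ∈ {k}ᶜ, d := by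
        rw [Finset.prod_const, Finset.card_compl, Finset.card_singleton]
    _ ∣ ∏ i ∈ {k}ᶜ, Mᵀ (σ i) i :=
        Finset.prod_dvd_prod_of_dvd _ _ fun i hi => hd i (by simpa using hi) _

/-- Subtracting one row of a `±1`-matrix from all the others makes every other row even. -/
theorem two_pow_card_sub_one_dvd_det_of_sign {M : Matrix ι ι R}
    (hM : ∀ i j, M i j = 1 ∨ M i j = -1) : 2 ^ (Fintype.card ι - 1) ∣ M.det := by
  cases isEmpty_or_nonempty ι
  · simp
  obtain ⟨k⟩ := ‹Nonempty ι›
  let c : ι → R := fun i => if i = k then 0 else 1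
  let N : Matrix ι ι R := of fun i j => M i j - c i * M k j
  have hN : N.det = M.det := by
    refine det_eq_of_forall_row_eq_smul_add_const (-c) k (by simp [c]) fun i j => ?_
    by_cases hi : i = k <;> simp [N, c, hi, sub_eq_add_neg]
  have hsign : ∀ a b : R, (a = 1 ∨ a = -1) → (b = 1 ∨ b = -1) → (2 : R) ∣ a - b := by
    rintro a b (rfl | rfl) (rfl | rfl)
    exacts [⟨0, by ring⟩, ⟨1, by ring⟩, ⟨-1, by ring⟩, ⟨0, by ring⟩]
  rw [← hN]
  refine pow_card_sub_one_dvd_det_of_dvd_row k fun i hi j => ?_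
  simpa [N, c, hi] using hsign _ _ (hM i j) (hM k j)

theorem four_pow_card_sub_one_le_sq_det_of_sign {M : Matrix ι ι ℤ}
    (hM : ∀ i j, M i j = 1 ∨ M i j = -1) (hdet : M.det ≠ 0) :
    4 ^ (Fintype.card ι - 1) ≤ M.det ^ 2 := by
  have hle : 2 ^ (Fintype.card ι - 1) ≤ |M.det| :=
    Int.le_of_dvd (abs_pos.mpr hdet) ((dvd_abs _ _).mpr (two_pow_card_sub_one_dvd_det_of_sign hM))
  calc (4 : ℤ) ^ (Fintype.card ι - 1) = (2 ^ (Fintype.card ι - 1)) ^ 2 := by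
        rw [← pow_mul, mul_comm, pow_mul]; norm_num
    _ ≤ |M.det| ^ 2 := pow_le_pow_left₀ (by positivity) hle 2
    _ = M.det ^ 2 := sq_abs _

end SignMatrix

section CauchyBinet

variable {R : Type*} [CommRing R] {m : ℕ} {α : Type*} [Fintype α]

theorem det_mul_eq_sum_det_submatrix_mul_prod_s6 (B : Matrix (Fin m) α R)
    (C : Matrix α (Fin m) R) :
    (B * C).det = ∑ f : Fin m → α, (B.submatrix id f).det * ∏ i, C (f i) i := by
  simp only [det_apply', mul_apply, prod_univ_sum, Fintype.piFinset_univ, Finset.sum_mul,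
    Finset.mul_sum, submatrix_apply, id, ← Finset.prod_mul_distrib, mul_assoc]
  exact Finset.sum_comm

variable [LinearOrder α]

/-- The Cauchy–Binet formula. -/
theorem det_mul_eq_sum_strictMono_s6 (B : Matrix (Fin m) α R) (C : Matrix α (Fin m) R) :
    (B * C).det = ∑ h : {h : Fin m → α // StrictMono h},
      (B.submatrix id h).det * (C.submatrix h id).det := by
  rw [det_mul_eq_sum_det_submatrix_mul_prod_s6, sum_eq_sum_strictMono_sum_perm]
  · refine Finset.sum_congr rfl fun ⟨h, _⟩ _ => ?_
    rw [det_apply' (C.submatrix h id), Finset.mul_sum]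
    refine Finset.sum_congr rfl fun π _ => ?_
    rw [show B.submatrix id (h ∘ π) = (B.submatrix id h).submatrix id π from rfl, det_permute']
    simp only [submatrix_apply, id, Function.comp_apply]
    ring
  · intro f hf
    obtain ⟨i, j, hij, hne⟩ := Function.not_injective_iff.mp hf
    rw [det_zero_of_column_eq hne fun k => by simp [hij], zero_mul]

theorem det_mul_transpose_eq_sum_sq (B : Matrix (Fin m) α R) :
    (B * Bᵀ).det = ∑ h : {h : Fin m → α // StrictMono h}, (B.submatrix id h).det ^ 2 := by
  simp only [det_mul_eq_sum_strictMono_s6, ← transpose_submatrix, det_transpose, sq]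

end CauchyBinet

section Gram

variable {ι κ : Type*} [Fintype ι] [DecidableEq ι] [Fintype κ]

theorem PosSemidef.det_le_trace_div_card_pow {A : Matrix ι ι ℝ} (hA : A.PosSemidef) :
    A.det ≤ (A.trace / Fintype.card ι) ^ Fintype.card ι := by
  have hdet := hA.isHermitian.det_eq_prod_eigenvalues
  have htrace := hA.isHermitian.trace_eq_sum_eigenvalues
  simp only [RCLike.ofReal_real_eq_id, id] at hdet htrace
  rw [hdet, htrace]
  exact Real.prod_le_sum_div_card_pow _ _ fun i _ => hA.eigenvalues_nonneg i

theorem det_mul_transpose_le_of_sign (B : Matrix ι κ ℝ)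
    (hB : ∀ i j, B i j = 1 ∨ B i j = -1) :
    (B * Bᵀ).det ≤ (Fintype.card κ : ℝ) ^ Fintype.card ι := by
  have hpsd : (B * Bᵀ).PosSemidef := by
    simpa using posSemidef_self_mul_conjTranspose B
  have htrace : (B * Bᵀ).trace = Fintype.card ι * Fintype.card κ := by
    have hsq : ∀ i j, B i j * B i j = 1 := fun i j => by rcases hB i j with h | h <;> simp [h]
    simp [trace, mul_apply, hsq]
  refine hpsd.det_le_trace_div_card_pow.trans_eq ?_
  rcases (Fintype.card ι).eq_zero_or_pos with h | h
  · simp [h]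
  · rw [htrace, mul_div_cancel_left₀ _ (by positivity)]

end Gram

theorem four_pow_mul_card_det_ne_zero_le {m : ℕ} {α : Type*} [LinearOrder α] [Fintype α]
    (B : Matrix (Fin m) α ℤ) (hB : ∀ i j, B i j = 1 ∨ B i j = -1) :
    4 ^ (m - 1) *
        (#{h : {h : Fin m → α // StrictMono h} | (B.submatrix id h).det ≠ 0} : ℤ) ≤
      (Fintype.card α : ℤ) ^ m := by
  have hgram : ((B * Bᵀ).det : ℝ) ≤ (Fintype.card α : ℝ) ^ m := by
    have hcast : (B * Bᵀ).map ((↑) : ℤ → ℝ) =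
        B.map ((↑) : ℤ → ℝ) * (B.map ((↑) : ℤ → ℝ))ᵀ := by
      rw [← transpose_map]; exact Matrix.map_mul (f := Int.castRingHom ℝ)
    rw [Int.cast_det, hcast]
    simpa using det_mul_transpose_le_of_sign (B.map ((↑) : ℤ → ℝ)) fun i j => by
      rcases hB i j with h | h <;> simp [h]
  set S := ({h : {h : Fin m → α // StrictMono h} | (B.submatrix id h).det ≠ 0} : Finset _)
  calc 4 ^ (m - 1) * (#S : ℤ) = ∑ h ∈ S, 4 ^ (m - 1) := by
        rw [Finset.sum_const, nsmul_eq_mul, mul_comm]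
    _ ≤ ∑ h ∈ S, (B.submatrix id h).det ^ 2 := Finset.sum_le_sum fun h hh => by
        have := four_pow_card_sub_one_le_sq_det_of_sign (M := B.submatrix id h)
          (fun i j => hB _ _) (Finset.mem_filter.mp hh).2
        rwa [Fintype.card_fin] at this
    _ ≤ ∑ h : {h : Fin m → α // StrictMono h}, (B.submatrix id h).det ^ 2 :=
        Finset.sum_le_sum_of_subset_of_nonneg (Finset.filter_subset _ _)
          fun _ _ _ => sq_nonneg _
    _ = (B * Bᵀ).det := (det_mul_transpose_eq_sum_sq B).symm
    _ ≤ (Fintype.card α : ℤ) ^ m := by exact_mod_cast hgram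

theorem four_pow_mul_choose_sub_pow_le_card_det_eq_zero {m n : ℕ}
    (B : Matrix (Fin m) (Fin n) ℤ) (hB : ∀ i j, B i j = 1 ∨ B i j = -1) :
    4 ^ (m - 1) * (n.choose m : ℤ) - (n : ℤ) ^ m ≤
      4 ^ (m - 1) *
        (#{h : {h : Fin m → Fin n // StrictMono h} | (B.submatrix id h).det = 0} : ℤ) := by
  have hbound := four_pow_mul_card_det_ne_zero_le B hB
  have hsplit := Finset.card_filter_add_card_filter_not (s := Finset.univ)
    fun h : {h : Fin m → Fin n // StrictMono h} => (B.submatrix id h).det = 0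
  rw [Finset.card_univ, card_strictMono_fin_s6] at hsplit
  rw [Fintype.card_fin] at hbound
  rw [← hsplit]
  push_cast
  linarith

end Matrix

theorem zero_minors_count_ge_general (n m : ℕ)
    (A : Matrix (Fin n) (Fin n) ℤ) (hA : ∀ i j, A i j = 1 ∨ A i j = -1) :
    (n.choose m : ℤ) * (4 ^ (m - 1) * (n.choose m : ℤ) - (n : ℤ) ^ m) ≤
      4 ^ (m - 1) *
        ((Finset.univ.filter
          (fun p : {f : Fin m → Fin n // StrictMono f} × {g : Fin m → Fin n // StrictMono g} =>
            (A.submatrix p.1.1 p.2.1).det = 0)).card : ℤ) := by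
  calc (n.choose m : ℤ) * (4 ^ (m - 1) * (n.choose m : ℤ) - (n : ℤ) ^ m)
      = ∑ _f : {f : Fin m → Fin n // StrictMono f},
          (4 ^ (m - 1) * (n.choose m : ℤ) - n ^ m) := by
        rw [Finset.sum_const, Finset.card_univ, card_strictMono_fin_s6, nsmul_eq_mul]
    _ ≤ ∑ f : {f : Fin m → Fin n // StrictMono f}, 4 ^ (m - 1) *
          (#{g : {g : Fin m → Fin n // StrictMono g} | (A.submatrix f.1 g.1).det = 0} : ℤ) :=
        Finset.sum_le_sum fun f _ =>
          four_pow_mul_choose_sub_pow_le_card_det_eq_zero (A.submatrix f.1 id) fun _ _ => hA _ _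
    _ = _ := by
        rw [← Finset.mul_sum, Finset.card_filter, Fintype.sum_prod_type]
        simp only [Finset.card_filter]
        push_cast
        rfl

/-- For an `n × n` `{±1}`-matrix `A` and `n ≥ m > 1`, the number `Z(m,A)` of
`m × m` submatrices with zero determinant (over all pairs of strictly monotone
index maps `Fin m → Fin n`) satisfies
`4^(m-1) * Z(m,A) ≥ C(n,m) * (4^(m-1) * C(n,m) - n^m)` (over the integers). -/
theorem zero_minors_count_ge (n m : ℕ) (hm : 1 < m) (hmn : m ≤ n)
    (A : Matrix (Fin n) (Fin n) ℤ) (hA : ∀ i j, A i j = 1 ∨ A i j = -1) :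
    (n.choose m : ℤ) * (4 ^ (m - 1) * (n.choose m : ℤ) - (n : ℤ) ^ m) ≤
      4 ^ (m - 1) *
        ((Finset.univ.filter
          (fun p : {f : Fin m → Fin n // StrictMono f} × {g : Fin m → Fin n // StrictMono g} =>
            (A.submatrix p.1.1 p.2.1).det = 0)).card : ℤ) :=
  zero_minors_count_ge_general n m A hA
end
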